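/- If X has an absolutely continuous density p with finite Fisher information I(X), then ∫ p'(x)² dx ≤ I(X)^{3/2}. -/

import Mathlib

/-!
Write `p'² = H p` with `H = p'²/p`, so that `∫ H = I`. By Cauchy–Schwarz,
`∫ |p'| = ∫ √H √p ≤ √I · √(∫ p) = √I`. Since `p` is integrable on `ℝ` it takes arbitrarily
small values, so the fundamental theorem of calculus bounds `p` by its total variation `∫ |p'|`,
hence `p ≤ √I`. Finally `∫ p'² = ∫ H p ≤ √I ∫ H = I^{3/2}`.
-/

open MeasureTheory Real

section Sqrt

variable {α : Type*} [MeasurableSpace α] {μ : Measure α} {f g : α → ℝ}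

lemma memLp_two_sqrt (hf : Integrable f μ) (hf₀ : 0 ≤ f) : MemLp (fun x => √(f x)) 2 μ := by
  rw [memLp_two_iff_integrable_sq (continuous_sqrt.comp_aestronglyMeasurable hf.1)]
  simpa only [sq_sqrt (hf₀ _)] using hf

lemma integrable_sqrt_mul (hf : Integrable f μ) (hg : Integrable g μ) (hf₀ : 0 ≤ f)
    (hg₀ : 0 ≤ g) : Integrable (fun x => √(f x * g x)) μ := by
  simpa only [sqrt_mul (hf₀ _), Pi.mul_def] using
    (memLp_two_sqrt hf hf₀).integrable_mul (memLp_two_sqrt hg hg₀)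

lemma integral_sqrt_mul_le (hf : Integrable f μ) (hg : Integrable g μ) (hf₀ : 0 ≤ f)
    (hg₀ : 0 ≤ g) : ∫ x, √(f x * g x) ∂μ ≤ √(∫ x, f x ∂μ) * √(∫ x, g x ∂μ) := by
  have hLp : ∀ {h : α → ℝ}, Integrable h μ → 0 ≤ h →
      MemLp (fun x => √(h x)) (ENNReal.ofReal 2) μ := fun hh hh₀ => by
    simpa only [ENNReal.ofReal_ofNat] using memLp_two_sqrt hh hh₀
  have holder := integral_mul_le_Lp_mul_Lq_of_nonneg HolderConjugate.two_two
    (ae_of_all _ fun x => sqrt_nonneg (f x)) (ae_of_all _ fun x => sqrt_nonneg (g x))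
    (hLp hf hf₀) (hLp hg hg₀)
  simpa only [← sqrt_mul (hf₀ _), rpow_two, sq_sqrt (hf₀ _), sq_sqrt (hg₀ _),
    ← sqrt_eq_rpow] using holder

end Sqrt

lemma MeasureTheory.Integrable.exists_lt_of_measure_univ_eq_top {α : Type*}
    [MeasurableSpace α] {μ : Measure α} {f : α → ℝ} (hf : Integrable f μ)
    (hμ : μ Set.univ = ⊤) {ε : ℝ} (hε : 0 < ε) : ∃ x, f x < ε := by
  by_contra! h
  have hconst : Integrable (fun _ => ε) μ :=
    hf.mono' aestronglyMeasurable_const (ae_of_all _ fun x => by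
      rw [norm_of_nonneg hε.le]; exact h x)
  exact not_isFiniteMeasure_iff.2 hμ ((integrable_const_iff_isFiniteMeasure hε.ne').1 hconst)

section FTC

variable {f f' : ℝ → ℝ}

lemma sub_le_integral_abs_of_eq_intervalIntegral
    (hFTC : ∀ a b : ℝ, f b - f a = ∫ x in a..b, f' x) (hf' : Integrable (fun x => |f' x|))
    (a b : ℝ) : f b - f a ≤ ∫ x, |f' x| := by
  rw [hFTC a b]
  by_cases hab : IntervalIntegrable f' volume a b
  · calc ∫ x in a..b, f' x ≤ |∫ x in a..b, f' x| := le_abs_self _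
      _ ≤ ∫ x in Set.uIoc a b, |f' x| := by
        simpa only [norm_eq_abs] using
          intervalIntegral.norm_integral_le_integral_norm_uIoc (f := f') (μ := volume)
      _ ≤ ∫ x, |f' x| := setIntegral_le_integral hf' (ae_of_all _ fun x => abs_nonneg _)
  · rw [intervalIntegral.integral_undef hab]
    exact integral_nonneg fun x => abs_nonneg _

lemma le_integral_abs_of_eq_intervalIntegral (hf : Integrable f)
    (hFTC : ∀ a b : ℝ, f b - f a = ∫ x in a..b, f' x) (hf' : Integrable (fun x => |f' x|))
    (x : ℝ) : f x ≤ ∫ x, |f' x| := by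
  refine le_of_forall_pos_le_add fun ε hε => ?_
  obtain ⟨a, ha⟩ := hf.exists_lt_of_measure_univ_eq_top Real.volume_univ hε
  linarith [sub_le_integral_abs_of_eq_intervalIntegral hFTC hf' a x]

end FTC

/-- If `X` has an absolutely continuous density `p` with finite Fisher information `I`,
then `∫ p'(x)² dx ≤ I^{3/2}`. -/
theorem integral_sq_deriv_le_fisher_pow
    (p p' : ℝ → ℝ) (I : ℝ)
    (hnn : ∀ x, 0 ≤ p x) (hint : Integrable p) (h1 : ∫ x, p x = 1)
    (hFTC : ∀ a b : ℝ, p b - p a = ∫ x in a..b, p' x)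
    (hconv : ∀ x, p x = 0 → p' x = 0)
    (hIfin : IntegrableOn (fun x => (p' x) ^ 2 / p x) {x | 0 < p x})
    (hI : I = ∫ x in {x | 0 < p x}, (p' x) ^ 2 / p x) :
    ∫ x, (p' x) ^ 2 ≤ I ^ ((3 : ℝ) / 2) := by
  set H : ℝ → ℝ := fun x => p' x ^ 2 / p x
  have hH₀ : 0 ≤ H := fun x => div_nonneg (sq_nonneg _) (hnn x)
  -- `H` vanishes where `p` does because `p' x ^ 2 / 0 = 0`.
  have hH_compl : ∀ x, x ∉ {x | 0 < p x} → H x = 0 := fun x hx => by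
    simp [H, le_antisymm (not_lt.1 hx) (hnn x)]
  have hH : Integrable H := hIfin.integrable_of_forall_notMem_eq_zero hH_compl
  have hHI : ∫ x, H x = I := by rw [hI, setIntegral_eq_integral_of_forall_compl_eq_zero hH_compl]
  have hsq : ∀ x, p' x ^ 2 = H x * p x := fun x => by
    rcases (hnn x).eq_or_lt with hx | hx
    · simp [H, hconv x hx.symm, ← hx]
    · exact (div_mul_cancel₀ _ hx.ne').symm
  have habs : (fun x => |p' x|) = fun x => √(H x * p x) := funext fun x => by
    rw [← hsq, sqrt_sq_eq_abs]
  have hp' : Integrable fun x => |p' x| := habs ▸ integrable_sqrt_mul hH hint hH₀ hnn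
  have hp_le : ∀ x, p x ≤ √I := fun x => calc
    p x ≤ ∫ x, |p' x| := le_integral_abs_of_eq_intervalIntegral hint hFTC hp' x
    _ ≤ √I * √1 := by rw [habs, ← hHI, ← h1]; exact integral_sqrt_mul_le hH hint hH₀ hnn
    _ = √I := by rw [sqrt_one, mul_one]
  have hI₀ : 0 ≤ I := hHI ▸ integral_nonneg hH₀
  calc ∫ x, p' x ^ 2 = ∫ x, H x * p x := by simp only [hsq]
    _ ≤ ∫ x, H x * √I :=
        integral_mono_of_nonneg (ae_of_all _ fun x => mul_nonneg (hH₀ x) (hnn x))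
          (hH.mul_const _) (ae_of_all _ fun x => mul_le_mul_of_nonneg_left (hp_le x) (hH₀ x))
    _ = I * I ^ ((1 : ℝ) / 2) := by rw [integral_mul_const, hHI, sqrt_eq_rpow]
    _ = I ^ ((3 : ℝ) / 2) := by rw [← rpow_one_add' hI₀ (by norm_num)]; norm_num
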